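/- arXiv:1312.1497 — 2 statements merged into one kernel-verified Lean document; each statement's English description precedes it below -/
import Mathlib

section
/- For every sS_∞-invariant normal subgroup H of Z_2^{*∞}, the set C_H of all partitions p admitting a labelling l with w(p,l) ∈ H is a group-theoretical category of partitions. -/
open Classical

/-- A partition diagram with `upper` upper points and `lower` lower points; the blocks are
encoded by the equivalence relation (setoid) on the disjoint union of the points. -/
structure PartitionDiagram where
  upper : ℕ
  lower : ℕ
  rel : Setoid (Fin upper ⊕ Fin lower)

namespace PartitionDiagram

/-- The partition determined by a labelling of the points: two points lie in the same block
iff they receive the same label. -/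
def ofLabels {u l : ℕ} (f : Fin u ⊕ Fin l → ℕ) : PartitionDiagram :=
  ⟨u, l, Setoid.ker f⟩

/-- The identity partition `| ∈ P(1,1)`. -/
def idPartition : PartitionDiagram := ofLabels (u := 1) (l := 1) fun _ => 0

/-- The pair partition `⊓ ∈ P(0,2)`. -/
def pairPartition : PartitionDiagram := ofLabels (u := 0) (l := 2) fun _ => 0

/-- The four block partition `⊓⊓ ∈ P(0,4)`. -/
def fourBlock : PartitionDiagram := ofLabels (u := 0) (l := 4) fun _ => 0

/-- The singleton partition `↑ ∈ P(0,1)`. -/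
def singletonPartition : PartitionDiagram := ofLabels (u := 0) (l := 1) fun _ => 0

/-- The double singleton partition `↑⊗↑ ∈ P(0,2)`. -/
def doubleSingleton : PartitionDiagram :=
  ofLabels (u := 0) (l := 2) (Sum.elim (fun i => (i : ℕ)) fun j => (j : ℕ))

/-- The crossing partition `⨯ ∈ P(2,2)`, with blocks `{1,2'}` and `{2,1'}`. -/
def crossing : PartitionDiagram :=
  ofLabels (u := 2) (l := 2) (Sum.elim (fun i => (i : ℕ)) fun j => 1 - (j : ℕ))

/-- The pair positioner partition `▷ ∈ P(3,3)`, with blocks `{1,2,2',3'}` and `{3,1'}`. -/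
def pairPositioner : PartitionDiagram :=
  ofLabels (u := 3) (l := 3)
    (Sum.elim (fun i => if (i : ℕ) = 2 then 1 else 0) fun j => if (j : ℕ) = 0 then 1 else 0)

/-- The partition `k_l ∈ P(l+2, l+2)` consisting of the four block `{1, 1', l+2, (l+2)'}`
together with the pairs `{j, j'}` for `2 ≤ j ≤ l+1`. -/
def kPart (n : ℕ) : PartitionDiagram :=
  ofLabels (u := n + 2) (l := n + 2)
    (fun x => if (Sum.elim Fin.val Fin.val x) = 0 ∨ (Sum.elim Fin.val Fin.val x) = n + 1
      then 0 else Sum.elim Fin.val Fin.val x)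

/-- The involution `p* ∈ P(l,k)` of `p ∈ P(k,l)`: turn the partition upside down. -/
def invol (p : PartitionDiagram) : PartitionDiagram :=
  ⟨p.lower, p.upper, Setoid.comap Sum.swap p.rel⟩

/-- Auxiliary map splitting the points of a tensor product into the points of the two factors. -/
def splitPoint {a b c d : ℕ} (x : Fin (a + b) ⊕ Fin (c + d)) :
    (Fin a ⊕ Fin c) ⊕ (Fin b ⊕ Fin d) :=
  match x with
  | Sum.inl u =>
    match finSumFinEquiv.symm u with
    | Sum.inl i => Sum.inl (Sum.inl i)
    | Sum.inr i => Sum.inr (Sum.inl i)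
  | Sum.inr v =>
    match finSumFinEquiv.symm v with
    | Sum.inl j => Sum.inl (Sum.inr j)
    | Sum.inr j => Sum.inr (Sum.inr j)

/-- The tensor product (horizontal concatenation) `p ⊗ q` of two partitions. -/
def tensor (p q : PartitionDiagram) : PartitionDiagram :=
  ⟨p.upper + q.upper, p.lower + q.lower,
    Setoid.ker fun x =>
      Sum.map (Quotient.mk p.rel) (Quotient.mk q.rel) (splitPoint x)⟩

section Composition

variable (p q : PartitionDiagram) (h : p.lower = q.upper)

/-- Inclusion of the points of `p` into the three-row diagram used for composition. -/
def iotaP : Fin p.upper ⊕ Fin p.lower → Fin p.upper ⊕ (Fin p.lower ⊕ Fin q.lower) :=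
  Sum.map id Sum.inl

/-- Inclusion of the points of `q` into the three-row diagram used for composition,
identifying the upper points of `q` with the lower points of `p`. -/
def iotaQ : Fin q.upper ⊕ Fin q.lower → Fin p.upper ⊕ (Fin p.lower ⊕ Fin q.lower) :=
  fun x => Sum.inr (Sum.map (Fin.cast h.symm) id x)

/-- The generating relation on the three-row diagram used for composition. -/
def compRel : Fin p.upper ⊕ (Fin p.lower ⊕ Fin q.lower) →
    Fin p.upper ⊕ (Fin p.lower ⊕ Fin q.lower) → Prop :=
  fun x y =>
    (∃ a b, p.rel.r a b ∧ x = iotaP p q a ∧ y = iotaP p q b) ∨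
    (∃ a b, q.rel.r a b ∧ x = iotaQ p q h a ∧ y = iotaQ p q h b)

/-- The composition (vertical concatenation) `qp ∈ P(k,m)` of `p ∈ P(k,l)` and `q ∈ P(l,m)`:
identify the lower points of `p` with the upper points of `q`, take the join of the block
structures and restrict to the upper points of `p` and the lower points of `q`. -/
def comp : PartitionDiagram :=
  ⟨p.upper, q.lower,
    Setoid.comap (Sum.map id Sum.inr) (Relation.EqvGen.setoid (compRel p q h))⟩

end Composition

/-- Rotation of the leftmost upper point to the leftmost lower position. -/
def rotLU (p : PartitionDiagram) (h : 0 < p.upper) : PartitionDiagram :=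
  ⟨p.upper - 1, p.lower + 1,
    Setoid.comap (fun x => match x with
      | Sum.inl j => Sum.inl (⟨(j : ℕ) + 1, by have := j.isLt; omega⟩ : Fin p.upper)
      | Sum.inr j => if hj : (j : ℕ) = 0 then Sum.inl (⟨0, h⟩ : Fin p.upper)
          else Sum.inr (⟨(j : ℕ) - 1, by have := j.isLt; omega⟩ : Fin p.lower)) p.rel⟩

/-- Rotation of the leftmost lower point to the leftmost upper position. -/
def rotLD (p : PartitionDiagram) (h : 0 < p.lower) : PartitionDiagram :=
  ⟨p.upper + 1, p.lower - 1,
    Setoid.comap (fun x => match x with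
      | Sum.inl j => if hj : (j : ℕ) = 0 then Sum.inr (⟨0, h⟩ : Fin p.lower)
          else Sum.inl (⟨(j : ℕ) - 1, by have := j.isLt; omega⟩ : Fin p.upper)
      | Sum.inr j => Sum.inr (⟨(j : ℕ) + 1, by have := j.isLt; omega⟩ : Fin p.lower)) p.rel⟩

/-- Rotation of the rightmost upper point to the rightmost lower position. -/
def rotRU (p : PartitionDiagram) (h : 0 < p.upper) : PartitionDiagram :=
  ⟨p.upper - 1, p.lower + 1,
    Setoid.comap (fun x => match x with
      | Sum.inl j => Sum.inl (⟨(j : ℕ), by have := j.isLt; omega⟩ : Fin p.upper)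
      | Sum.inr j => if hj : (j : ℕ) < p.lower then Sum.inr (⟨(j : ℕ), hj⟩ : Fin p.lower)
          else Sum.inl (⟨p.upper - 1, by omega⟩ : Fin p.upper)) p.rel⟩

/-- Rotation of the rightmost lower point to the rightmost upper position. -/
def rotRD (p : PartitionDiagram) (h : 0 < p.lower) : PartitionDiagram :=
  ⟨p.upper + 1, p.lower - 1,
    Setoid.comap (fun x => match x with
      | Sum.inl j => if hj : (j : ℕ) < p.upper then Sum.inl (⟨(j : ℕ), hj⟩ : Fin p.upper)
          else Sum.inr (⟨p.lower - 1, by omega⟩ : Fin p.lower)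
      | Sum.inr j => Sum.inr (⟨(j : ℕ), by have := j.isLt; omega⟩ : Fin p.lower)) p.rel⟩

/-- The partition obtained from `p` by merging the block of the point `a` and the block of
the point `b` into a single block, leaving all other blocks unchanged. -/
noncomputable def mergeBlocks (p : PartitionDiagram)
    (a b : Fin p.upper ⊕ Fin p.lower) : PartitionDiagram :=
  ⟨p.upper, p.lower,
    Setoid.ker fun x =>
      if p.rel.r x a ∨ p.rel.r x b then (none : Option (Quotient p.rel))
      else some (Quotient.mk p.rel x)⟩

end PartitionDiagram

open PartitionDiagram

/-- A set of partitions is a category of partitions if it contains the identity partition and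
the pair partition and is closed under tensor products, composition, involution and the four
rotation operations. -/
structure IsPartitionCategory (M : Set PartitionDiagram) : Prop where
  id_mem : idPartition ∈ M
  pair_mem : pairPartition ∈ M
  tensor_mem : ∀ p ∈ M, ∀ q ∈ M, tensor p q ∈ M
  comp_mem : ∀ p ∈ M, ∀ q ∈ M, ∀ h : p.lower = q.upper, comp p q h ∈ M
  invol_mem : ∀ p ∈ M, invol p ∈ M
  rotLU_mem : ∀ p ∈ M, ∀ h : 0 < p.upper, rotLU p h ∈ M
  rotLD_mem : ∀ p ∈ M, ∀ h : 0 < p.lower, rotLD p h ∈ M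
  rotRU_mem : ∀ p ∈ M, ∀ h : 0 < p.upper, rotRU p h ∈ M
  rotRD_mem : ∀ p ∈ M, ∀ h : 0 < p.lower, rotRD p h ∈ M

/-- A category of partitions is group-theoretical if it contains the pair positioner
partition `▷`. -/
def IsGroupTheoreticalCategory (M : Set PartitionDiagram) : Prop :=
  IsPartitionCategory M ∧ pairPositioner ∈ M

/-- The smallest category of partitions containing a given set of partitions. -/
def generatedCategory (S : Set PartitionDiagram) : Set PartitionDiagram :=
  ⋂₀ { M | IsPartitionCategory M ∧ S ⊆ M }

/-- The group `Z_2^{*∞}`: the free product of countably many copies of the cyclic group of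
order two. -/
abbrev FreeZ2 := Monoid.CoprodI (fun _ : ℕ => Multiplicative (ZMod 2))

/-- The free generators `a_1, a_2, …` of `Z_2^{*∞}`, each of order two. -/
def gen (n : ℕ) : FreeZ2 :=
  Monoid.CoprodI.of (i := n) (Multiplicative.ofAdd (1 : ZMod 2))

/-- A labelling of a partition assigns (indices of) pairwise distinct generators of
`Z_2^{*∞}` to the blocks: two points receive the same label iff they lie in the same block. -/
def IsLabelling (p : PartitionDiagram) (lab : Fin p.upper ⊕ Fin p.lower → ℕ) : Prop :=
  ∀ x y, lab x = lab y ↔ p.rel.r x y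

/-- The word `w(p,l) ∈ Z_2^{*∞}` of a labelled partition: after rotating all upper points to
the right-hand end of the lower row, read off the generators assigned to the points from left
to right, i.e. read the lower points from left to right and then the upper points from right
to left. -/
def wordOf (p : PartitionDiagram) (lab : Fin p.upper ⊕ Fin p.lower → ℕ) : FreeZ2 :=
  ((List.ofFn fun j : Fin p.lower => gen (lab (Sum.inr j))) ++
    (List.ofFn fun i : Fin p.upper => gen (lab (Sum.inl i))).reverse).prod

/-- `F(C) ⊆ Z_2^{*∞}` is the set of all `w(p,l)` where `p ∈ C` and `l` is a labelling. -/
def Fmap (M : Set PartitionDiagram) : Set FreeZ2 :=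
  { g | ∃ p ∈ M, ∃ lab, IsLabelling p lab ∧ wordOf p lab = g }

/-- The set of partitions admitting a labelling whose word lies in `H`. -/
def catOf (H : Set FreeZ2) : Set PartitionDiagram :=
  { p | ∃ lab, IsLabelling p lab ∧ wordOf p lab ∈ H }

/-- The endomorphism of `Z_2^{*∞}` identifying letters according to `f`, i.e. sending
`a_k` to `a_{f k}` for every `k`. -/
def identifyLetters (f : ℕ → ℕ) : Monoid.End FreeZ2 :=
  Monoid.CoprodI.lift fun i =>
    (Monoid.CoprodI.of (M := fun _ : ℕ => Multiplicative (ZMod 2)) (i := f i))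

/-- The strong symmetric semigroup `sS_∞`: the subsemigroup of `End(Z_2^{*∞})` generated by
the finite identifications of letters. -/
def strongSymmetricSemigroup : Subsemigroup (Monoid.End FreeZ2) :=
  Subsemigroup.closure
    { φ | ∃ f : ℕ → ℕ, (∃ n : ℕ, ∀ k, n ≤ k → f k = k) ∧ φ = identifyLetters f }

/-- A subset of `Z_2^{*∞}` is `sS_∞`-invariant if it is preserved by every element of the
strong symmetric semigroup. -/
def IsSSInvariant (H : Set FreeZ2) : Prop :=
  ∀ φ ∈ strongSymmetricSemigroup, ∀ g ∈ H, φ g ∈ H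

/-- A partition is in single leg form if it has no upper points and no two consecutive
points belong to the same block. -/
def IsSingleLeg (p : PartitionDiagram) : Prop :=
  p.upper = 0 ∧
    ∀ i j : Fin p.lower, (j : ℕ) = (i : ℕ) + 1 → ¬ p.rel.r (Sum.inr i) (Sum.inr j)

/-- `C_sl`: the set of all partitions in `C` with no upper points in single leg form. -/
def slSet (M : Set PartitionDiagram) : Set PartitionDiagram :=
  { p ∈ M | IsSingleLeg p }

/-- The partition with no upper points determined by a word (a list of letters): two points
lie in the same block iff the corresponding letters coincide. -/
def wordPartition (w : List ℕ) : PartitionDiagram :=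
  ofLabels (u := 0) (l := w.length) (Sum.elim (fun i => (i : ℕ)) fun j => w.get j)

/-- The canonical letter of the block of a lower point: the least index of a point in its
block. -/
noncomputable def blockLabel (p : PartitionDiagram) (j : Fin p.lower) : ℕ :=
  sInf { i : ℕ | ∃ h : i < p.lower, p.rel.r (Sum.inr ⟨i, h⟩) (Sum.inr j) }

/-- The canonical word of a partition with no upper points. -/
noncomputable def canonWord (p : PartitionDiagram) : List ℕ :=
  List.ofFn fun j : Fin p.lower => blockLabel p j

/-- Full reduction of a word over an alphabet of involutions: repeatedly delete adjacent
equal pairs of letters.  This computes the result of iterating the operation replacing every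
exponent in the run-decomposition of the word by its parity. -/
def reduceWord (w : List ℕ) : List ℕ :=
  w.foldr (fun x acc => match acc with
    | [] => [x]
    | y :: rest => if x = y then rest else x :: y :: rest) []

/-- The single leg version of a partition with no upper points: the unique partition in
single leg form obtained by iteratively replacing every exponent in its run-decomposition by
its parity. -/
noncomputable def singleLegVersion (p : PartitionDiagram) : PartitionDiagram :=
  wordPartition (reduceWord (canonWord p))

/-!
Write `w(p,l) = L · U⁻¹`, where `L` and `U` are the products of the generators along the lower
and the upper row. Rotations at the right end leave `w` unchanged, rotations at the left end
conjugate it by a generator, and the involution inverts it. For tensor products and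
compositions, `w(p ⊗ q) = L_p · w(q) · U_p⁻¹` and `w(qp) = w(q) · w(p)` as soon as the labels
on the identified middle row agree. Normality of `H` takes care of the conjugations, and
`sS_∞`-invariance makes `w(p,l) ∈ H` independent of the labelling; it even survives labels that
merge blocks, which is what a labelling of `p ⊗ q` or of `qp` restricts to on `p` and `q`.
-/

theorem gen_mul_self (n : ℕ) : gen n * gen n = 1 := by
  rw [gen, ← map_mul]
  exact map_one _

theorem gen_inv (n : ℕ) : (gen n)⁻¹ = gen n :=
  inv_eq_of_mul_eq_one_right (gen_mul_self n)

theorem identifyLetters_gen (f : ℕ → ℕ) (n : ℕ) : identifyLetters f (gen n) = gen (f n) :=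
  Monoid.CoprodI.lift_of _ _

theorem identifyLetters_mem_strongSymmetricSemigroup {f : ℕ → ℕ} {n : ℕ}
    (hf : ∀ k, n ≤ k → f k = k) : identifyLetters f ∈ strongSymmetricSemigroup :=
  Subsemigroup.subset_closure ⟨f, ⟨n, hf⟩, rfl⟩

theorem Setoid.exists_nat_labelling {α : Type*} [Countable α] (s : Setoid α) :
    ∃ c : α → ℕ, ∀ x y, c x = c y ↔ s x y := by
  obtain ⟨e, he⟩ := Countable.exists_injective_nat (Quotient s)
  exact ⟨e ∘ Quotient.mk s, fun x y => he.eq_iff.trans Quotient.eq⟩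

theorem exists_identifyLetters_comp {α : Type*} [Finite α] {lab lab' : α → ℕ}
    (h : ∀ x y, lab x = lab y → lab' x = lab' y) :
    ∃ f : ℕ → ℕ, ∃ n, (∀ k, n ≤ k → f k = k) ∧ lab' = f ∘ lab := by
  obtain ⟨n, hn⟩ := (Set.finite_range lab).bddAbove
  refine ⟨fun k => if hk : ∃ x, lab x = k then lab' hk.choose else k, n + 1,
    fun k hk => dif_neg ?_, funext fun x => ?_⟩
  · rintro ⟨x, rfl⟩
    have := hn ⟨x, rfl⟩
    omega
  · have hx : ∃ y, lab y = lab x := ⟨x, rfl⟩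
    simp only [Function.comp_apply, dif_pos hx]
    exact (h _ _ hx.choose_spec).symm

namespace PartitionDiagram

theorem exists_isLabelling (p : PartitionDiagram) : ∃ lab, IsLabelling p lab :=
  p.rel.exists_nat_labelling

section Words

variable (p : PartitionDiagram) (lab : Fin p.upper ⊕ Fin p.lower → ℕ)

def lowerProd : FreeZ2 := (List.ofFn fun j : Fin p.lower => gen (lab (Sum.inr j))).prod

def upperProd : FreeZ2 := (List.ofFn fun i : Fin p.upper => gen (lab (Sum.inl i))).prod

theorem wordOf_eq_lowerProd_mul_inv : wordOf p lab = p.lowerProd lab * (p.upperProd lab)⁻¹ := by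
  rw [wordOf, List.prod_append, lowerProd, upperProd, List.prod_inv_reverse, List.map_ofFn]
  simp only [Function.comp_def, gen_inv]

theorem identifyLetters_wordOf (f : ℕ → ℕ) :
    identifyLetters f (wordOf p lab) = wordOf p (f ∘ lab) := by
  simp only [wordOf, map_list_prod, List.map_append, List.map_reverse, List.map_ofFn,
    Function.comp_def, identifyLetters_gen]

end Words

section Tensor

variable (p q : PartitionDiagram)

def tensorLeft : Fin p.upper ⊕ Fin p.lower → Fin (tensor p q).upper ⊕ Fin (tensor p q).lower :=
  Sum.map (Fin.castAdd q.upper) (Fin.castAdd q.lower)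

def tensorRight : Fin q.upper ⊕ Fin q.lower → Fin (tensor p q).upper ⊕ Fin (tensor p q).lower :=
  Sum.map (Fin.natAdd p.upper) (Fin.natAdd p.lower)

variable {p q}

theorem tensor_rel_tensorLeft {a b : Fin p.upper ⊕ Fin p.lower} (hab : p.rel a b) :
    (tensor p q).rel (tensorLeft p q a) (tensorLeft p q b) := by
  change Sum.map _ _ (splitPoint _) = Sum.map _ _ (splitPoint _)
  rcases a with a | a <;> rcases b with b | b <;>
    simpa [tensor, tensorLeft, splitPoint, Setoid.ker_def, Quotient.eq] using hab

theorem tensor_rel_tensorRight {a b : Fin q.upper ⊕ Fin q.lower} (hab : q.rel a b) :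
    (tensor p q).rel (tensorRight p q a) (tensorRight p q b) := by
  change Sum.map _ _ (splitPoint _) = Sum.map _ _ (splitPoint _)
  rcases a with a | a <;> rcases b with b | b <;>
    simpa [tensor, tensorRight, splitPoint, Setoid.ker_def, Quotient.eq] using hab

variable (c : Fin (tensor p q).upper ⊕ Fin (tensor p q).lower → ℕ)

theorem lowerProd_tensor :
    (tensor p q).lowerProd c =
      p.lowerProd (c ∘ tensorLeft p q) * q.lowerProd (c ∘ tensorRight p q) := by
  change (List.ofFn fun j : Fin (p.lower + q.lower) => gen (c (Sum.inr j))).prod = _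
  rw [List.ofFn_add, List.prod_append]
  rfl

theorem upperProd_tensor :
    (tensor p q).upperProd c =
      p.upperProd (c ∘ tensorLeft p q) * q.upperProd (c ∘ tensorRight p q) := by
  change (List.ofFn fun i : Fin (p.upper + q.upper) => gen (c (Sum.inl i))).prod = _
  rw [List.ofFn_add, List.prod_append]
  rfl

theorem wordOf_tensor : wordOf (tensor p q) c =
    p.lowerProd (c ∘ tensorLeft p q) * wordOf q (c ∘ tensorRight p q) *
      (p.upperProd (c ∘ tensorLeft p q))⁻¹ := by
  simp only [wordOf_eq_lowerProd_mul_inv, lowerProd_tensor, upperProd_tensor, mul_inv_rev,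
    mul_assoc]

end Tensor

theorem wordOf_comp (p q : PartitionDiagram) (h : p.lower = q.upper)
    (c : Fin p.upper ⊕ (Fin p.lower ⊕ Fin q.lower) → ℕ) :
    wordOf (comp p q h) (c ∘ Sum.map id Sum.inr) =
      wordOf q (c ∘ iotaQ p q h) * wordOf p (c ∘ iotaP p q) := by
  have hmid : q.upperProd (c ∘ iotaQ p q h) = p.lowerProd (c ∘ iotaP p q) := by
    rw [upperProd, lowerProd, List.ofFn_congr h.symm]
    rfl
  simp only [wordOf_eq_lowerProd_mul_inv, hmid, mul_assoc, inv_mul_cancel_left]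
  rfl

end PartitionDiagram

theorem IsSSInvariant.wordOf_mem {H : Set FreeZ2} (hH : IsSSInvariant H) {p : PartitionDiagram}
    (hp : p ∈ catOf H) {lab' : Fin p.upper ⊕ Fin p.lower → ℕ}
    (hlab' : ∀ x y, p.rel x y → lab' x = lab' y) : wordOf p lab' ∈ H := by
  obtain ⟨lab, hlab, hw⟩ := hp
  obtain ⟨f, n, hf, rfl⟩ := exists_identifyLetters_comp fun x y h => hlab' x y ((hlab x y).1 h)
  rw [← identifyLetters_wordOf]
  exact hH _ (identifyLetters_mem_strongSymmetricSemigroup hf) _ hw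

section

variable {H : Subgroup FreeZ2}

theorem mem_catOf_of_lowerProd_eq_upperProd {p : PartitionDiagram}
    {lab : Fin p.upper ⊕ Fin p.lower → ℕ} (hlab : IsLabelling p lab)
    (h : p.lowerProd lab = p.upperProd lab) : p ∈ catOf (H : Set FreeZ2) :=
  ⟨lab, hlab, by rw [wordOf_eq_lowerProd_mul_inv, h, mul_inv_cancel]; exact H.one_mem⟩

theorem idPartition_mem_catOf : idPartition ∈ catOf (H : Set FreeZ2) :=
  mem_catOf_of_lowerProd_eq_upperProd (lab := fun _ => 0) (fun _ _ => Iff.rfl) rfl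

theorem pairPartition_mem_catOf : pairPartition ∈ catOf (H : Set FreeZ2) :=
  mem_catOf_of_lowerProd_eq_upperProd (lab := fun _ => 0) (fun _ _ => Iff.rfl) <| by
    simp [lowerProd, upperProd, pairPartition, ofLabels, gen_mul_self]

theorem pairPositioner_mem_catOf : pairPositioner ∈ catOf (H : Set FreeZ2) :=
  mem_catOf_of_lowerProd_eq_upperProd (fun _ _ => Iff.rfl) <| by
    simp [lowerProd, upperProd, pairPositioner, ofLabels, List.ofFn_succ, ← mul_assoc,
      gen_mul_self]

theorem invol_mem_catOf {p : PartitionDiagram} (hp : p ∈ catOf (H : Set FreeZ2)) :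
    invol p ∈ catOf (H : Set FreeZ2) := by
  obtain ⟨lab, hlab, hw⟩ := hp
  refine ⟨lab ∘ Sum.swap, fun x y => hlab _ _, ?_⟩
  have : wordOf (invol p) (lab ∘ Sum.swap) = (wordOf p lab)⁻¹ := by
    simp only [wordOf_eq_lowerProd_mul_inv, mul_inv_rev, inv_inv]
    rfl
  exact this ▸ H.inv_mem hw

theorem rotLU_mem_catOf (hN : H.Normal) {p : PartitionDiagram} (hp : p ∈ catOf (H : Set FreeZ2))
    (h : 0 < p.upper) : rotLU p h ∈ catOf (H : Set FreeZ2) := by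
  obtain ⟨_ | u, l, rel⟩ := p
  · exact absurd h (lt_irrefl 0)
  obtain ⟨lab, hlab, hw⟩ := hp
  refine ⟨lab ∘ _, fun x y => hlab _ _, ?_⟩
  rw [wordOf_eq_lowerProd_mul_inv] at hw ⊢
  simp only [lowerProd, upperProd, List.ofFn_succ, List.prod_cons, rotLU, Function.comp_apply,
    Fin.cast_eq_self, Fin.val_succ, Fin.succ_ne_zero, Fin.val_eq_zero_iff, dite_true, dite_false,
    add_tsub_cancel_right, Fin.zero_eta, Fin.eta, mul_inv_rev, ← mul_assoc] at hw ⊢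
  have := hN.mem_comm hw
  rwa [gen_inv, ← mul_assoc] at this

theorem rotLD_mem_catOf (hN : H.Normal) {p : PartitionDiagram} (hp : p ∈ catOf (H : Set FreeZ2))
    (h : 0 < p.lower) : rotLD p h ∈ catOf (H : Set FreeZ2) := by
  obtain ⟨u, _ | l, rel⟩ := p
  · exact absurd h (lt_irrefl 0)
  obtain ⟨lab, hlab, hw⟩ := hp
  refine ⟨lab ∘ _, fun x y => hlab _ _, ?_⟩
  rw [wordOf_eq_lowerProd_mul_inv] at hw ⊢
  simp only [lowerProd, upperProd, List.ofFn_succ, List.prod_cons, rotLD, Function.comp_apply,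
    Fin.cast_eq_self, Fin.val_succ, Fin.succ_ne_zero, Fin.val_eq_zero_iff, dite_true, dite_false,
    add_tsub_cancel_right, Fin.zero_eta, Fin.eta, mul_inv_rev, ← mul_assoc] at hw ⊢
  rw [mul_assoc] at hw
  rw [gen_inv]
  exact hN.mem_comm hw

theorem rotRU_mem_catOf {p : PartitionDiagram} (hp : p ∈ catOf (H : Set FreeZ2))
    (h : 0 < p.upper) : rotRU p h ∈ catOf (H : Set FreeZ2) := by
  obtain ⟨_ | u, l, rel⟩ := p
  · exact absurd h (lt_irrefl 0)
  obtain ⟨lab, hlab, hw⟩ := hp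
  refine ⟨lab ∘ _, fun x y => hlab _ _, ?_⟩
  rw [wordOf_eq_lowerProd_mul_inv] at hw ⊢
  simp only [lowerProd, upperProd, List.ofFn_succ', List.prod_concat, rotRU, Function.comp_apply,
    Fin.cast_eq_self, Fin.val_last, Fin.val_castSucc, Fin.is_lt, lt_self_iff_false, dite_true,
    dite_false, add_tsub_cancel_right, Fin.eta, mul_inv_rev, ← mul_assoc] at hw ⊢
  rwa [gen_inv] at hw

theorem rotRD_mem_catOf {p : PartitionDiagram} (hp : p ∈ catOf (H : Set FreeZ2))
    (h : 0 < p.lower) : rotRD p h ∈ catOf (H : Set FreeZ2) := by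
  obtain ⟨u, _ | l, rel⟩ := p
  · exact absurd h (lt_irrefl 0)
  obtain ⟨lab, hlab, hw⟩ := hp
  refine ⟨lab ∘ _, fun x y => hlab _ _, ?_⟩
  rw [wordOf_eq_lowerProd_mul_inv] at hw ⊢
  simp only [lowerProd, upperProd, List.ofFn_succ', List.prod_concat, rotRD, Function.comp_apply,
    Fin.cast_eq_self, Fin.val_last, Fin.val_castSucc, Fin.is_lt, lt_self_iff_false, dite_true,
    dite_false, add_tsub_cancel_right, Fin.eta, mul_inv_rev, ← mul_assoc] at hw ⊢
  rwa [gen_inv]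

theorem tensor_mem_catOf (hN : H.Normal) (hInv : IsSSInvariant (H : Set FreeZ2))
    {p q : PartitionDiagram} (hp : p ∈ catOf (H : Set FreeZ2)) (hq : q ∈ catOf (H : Set FreeZ2)) :
    tensor p q ∈ catOf (H : Set FreeZ2) := by
  obtain ⟨c, hc⟩ := (tensor p q).exists_isLabelling
  refine ⟨c, hc, ?_⟩
  have hwp := hInv.wordOf_mem hp (lab' := c ∘ tensorLeft p q) fun a b hab =>
    (hc _ _).2 (tensor_rel_tensorLeft hab)
  have hwq := hInv.wordOf_mem hq (lab' := c ∘ tensorRight p q) fun a b hab =>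
    (hc _ _).2 (tensor_rel_tensorRight hab)
  rw [wordOf_eq_lowerProd_mul_inv] at hwp
  rw [wordOf_tensor]
  simpa only [mul_assoc, inv_mul_cancel_left, SetLike.mem_coe] using
    H.mul_mem (hN.conj_mem _ hwq (p.lowerProd (c ∘ tensorLeft p q))) hwp

theorem comp_mem_catOf (hInv : IsSSInvariant (H : Set FreeZ2))
    {p q : PartitionDiagram} (hp : p ∈ catOf (H : Set FreeZ2)) (hq : q ∈ catOf (H : Set FreeZ2))
    (h : p.lower = q.upper) : comp p q h ∈ catOf (H : Set FreeZ2) := by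
  obtain ⟨c, hc⟩ := (Relation.EqvGen.setoid (compRel p q h)).exists_nat_labelling
  refine ⟨c ∘ Sum.map id Sum.inr, fun x y => hc _ _, ?_⟩
  rw [wordOf_comp]
  exact H.mul_mem
    (hInv.wordOf_mem hq fun a b hab => (hc _ _).2 (.rel _ _ (.inr ⟨a, b, hab, rfl, rfl⟩)))
    (hInv.wordOf_mem hp fun a b hab => (hc _ _).2 (.rel _ _ (.inl ⟨a, b, hab, rfl, rfl⟩)))

end

/-- For every `sS_∞`-invariant normal subgroup `H` of `Z_2^{*∞}`, the set `C_H`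
of all partitions admitting a labelling `l` with `w(p,l) ∈ H` is a group-theoretical category
of partitions. -/
theorem catOf_isGroupTheoreticalCategory (H : Subgroup FreeZ2) (hN : H.Normal)
    (hInv : IsSSInvariant (H : Set FreeZ2)) :
    IsGroupTheoreticalCategory (catOf (H : Set FreeZ2)) :=
  ⟨{ id_mem := idPartition_mem_catOf
     pair_mem := pairPartition_mem_catOf
     tensor_mem := fun _ hp _ hq => tensor_mem_catOf hN hInv hp hq
     comp_mem := fun _ hp _ hq => comp_mem_catOf hInv hp hq
     invol_mem := fun _ => invol_mem_catOf
     rotLU_mem := fun _ => rotLU_mem_catOf hN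
     rotLD_mem := fun _ => rotLD_mem_catOf hN
     rotRU_mem := fun _ => rotRU_mem_catOf
     rotRD_mem := fun _ => rotRD_mem_catOf },
   pairPositioner_mem_catOf⟩
end

section
/- For the category of partitions C = ⟨⨯, ↑⊗↑, ⊓⊓⟩ generated by the crossing partition, the double singleton and the four block partition, F(C) is the kernel of the group homomorphism Z_2^{*∞} → Z_2 sending every generator a_i to the nontrivial element of Z_2; equivalently, F(C) consists exactly of the elements of Z_2^{*∞} whose reduced word has even length, and Z_2^{*∞}/F(C) ≅ Z_2. -/
open Classical

open PartitionDiagram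

/-!
Every generator has an even number of points and all operations of a category of partitions
preserve that parity, so every word in `F(C)` has even length. Conversely, a word of length `2m`
is the word of the partition of `2m` lower points whose blocks are the positions of equal
letters. That partition arises from `(↑⊗↑)^{⊗m}`, all of whose blocks are singletons, by merging
blocks one pair at a time: composing with `|^{⊗k} ⊗ ⊓⊓ ⊗ |^{⊗l}`, with `⊓⊓` rotated into
`P(2,2)`, merges the blocks of two neighbouring points, and conjugating by crossings makes any
two points neighbours.
-/

theorem isPartitionCategory_generatedCategory (S : Set PartitionDiagram) :
    IsPartitionCategory (generatedCategory S) where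
  id_mem := Set.mem_sInter.2 fun _ hM => hM.1.id_mem
  pair_mem := Set.mem_sInter.2 fun _ hM => hM.1.pair_mem
  tensor_mem _ hp _ hq := Set.mem_sInter.2 fun M hM =>
    hM.1.tensor_mem _ (Set.mem_sInter.1 hp M hM) _ (Set.mem_sInter.1 hq M hM)
  comp_mem _ hp _ hq h := Set.mem_sInter.2 fun M hM =>
    hM.1.comp_mem _ (Set.mem_sInter.1 hp M hM) _ (Set.mem_sInter.1 hq M hM) h
  invol_mem _ hp := Set.mem_sInter.2 fun M hM => hM.1.invol_mem _ (Set.mem_sInter.1 hp M hM)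
  rotLU_mem _ hp h := Set.mem_sInter.2 fun M hM => hM.1.rotLU_mem _ (Set.mem_sInter.1 hp M hM) h
  rotLD_mem _ hp h := Set.mem_sInter.2 fun M hM => hM.1.rotLD_mem _ (Set.mem_sInter.1 hp M hM) h
  rotRU_mem _ hp h := Set.mem_sInter.2 fun M hM => hM.1.rotRU_mem _ (Set.mem_sInter.1 hp M hM) h
  rotRD_mem _ hp h := Set.mem_sInter.2 fun M hM => hM.1.rotRD_mem _ (Set.mem_sInter.1 hp M hM) h

theorem subset_generatedCategory (S : Set PartitionDiagram) : S ⊆ generatedCategory S :=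
  Set.subset_sInter fun _ hM => hM.2

theorem generatedCategory_subset {S M : Set PartitionDiagram} (hM : IsPartitionCategory M)
    (hS : S ⊆ M) : generatedCategory S ⊆ M :=
  Set.sInter_subset_of_mem ⟨hM, hS⟩

theorem isPartitionCategory_even_upper_add_lower :
    IsPartitionCategory {p | Even (p.upper + p.lower)} := by
  refine ⟨?_, ?_, ?_, ?_, ?_, ?_, ?_, ?_, ?_⟩ <;> intros <;>
    simp only [Set.mem_ofPred_eq, Nat.even_iff, idPartition, pairPartition, ofLabels, tensor,
      comp, invol, rotLU, rotLD, rotRU, rotRD] at * <;> omega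

theorem even_upper_add_lower_of_mem_generatedCategory {S : Set PartitionDiagram}
    (hS : ∀ p ∈ S, Even (p.upper + p.lower)) {p : PartitionDiagram}
    (hp : p ∈ generatedCategory S) : Even (p.upper + p.lower) :=
  generatedCategory_subset isPartitionCategory_even_upper_add_lower hS hp

namespace PartitionDiagram

def pointCode {u l : ℕ} : Fin u ⊕ Fin l → Bool × ℕ :=
  Sum.elim (fun i => (true, i)) fun j => (false, j)

theorem pointCode_lt {u l : ℕ} (x : Fin u ⊕ Fin l) :
    (pointCode x).2 < if (pointCode x).1 then u else l := by
  rcases x with i | i <;> simp [pointCode, i.isLt]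

structure HasShape (q : PartitionDiagram) (a b : ℕ) (F : Bool × ℕ → ℕ) : Prop where
  upper_eq : q.upper = a
  lower_eq : q.lower = b
  rel_iff : ∀ x y, q.rel.r x y ↔ F (pointCode x) = F (pointCode y)

theorem HasShape.congr {q : PartitionDiagram} {a b : ℕ} {F F' : Bool × ℕ → ℕ}
    (hq : HasShape q a b F)
    (hFF' : ∀ s v s' v', v < (if s then a else b) → v' < (if s' then a else b) →
      (F (s, v) = F (s', v') ↔ F' (s, v) = F' (s', v'))) : HasShape q a b F' := by
  obtain ⟨rfl, rfl, hr⟩ := hq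
  exact ⟨rfl, rfl, fun x y => (hr x y).trans (hFF' _ _ _ _ (pointCode_lt x) (pointCode_lt y))⟩

theorem hasShape_ofLabels {u l : ℕ} (f : Fin u ⊕ Fin l → ℕ) (F : Bool × ℕ → ℕ)
    (hF : ∀ x, F (pointCode x) = f x) : HasShape (ofLabels f) u l F :=
  ⟨rfl, rfl, fun x y => (congrArg₂ Eq (hF x) (hF y)).to_iff.symm⟩

/-- Left factor even, right factor odd: no block of a tensor product meets both factors. -/
def sideBySide (a b : ℕ) (F G : Bool × ℕ → ℕ) (pt : Bool × ℕ) : ℕ :=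
  if pt.2 < (if pt.1 then a else b) then 2 * F pt
  else 2 * G (pt.1, pt.2 - if pt.1 then a else b) + 1

theorem sideBySide_pointCode {a b c d : ℕ} (F G : Bool × ℕ → ℕ)
    (x : Fin (a + b) ⊕ Fin (c + d)) :
    sideBySide a c F G (pointCode x) =
      Sum.elim (fun z => 2 * F (pointCode z)) (fun z => 2 * G (pointCode z) + 1)
        (splitPoint x) := by
  rcases x with u | u <;> rcases h : finSumFinEquiv.symm u with i | i <;>
    obtain rfl := (Equiv.symm_apply_eq _).mp h <;>
    simp [splitPoint, sideBySide, pointCode]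

theorem HasShape.tensor {p q : PartitionDiagram} {a b c d : ℕ} {F G : Bool × ℕ → ℕ}
    (hp : HasShape p a b F) (hq : HasShape q c d G) :
    HasShape (tensor p q) (a + c) (b + d) (sideBySide a b F G) := by
  obtain ⟨rfl, rfl, hpr⟩ := hp
  obtain ⟨rfl, rfl, hqr⟩ := hq
  refine ⟨rfl, rfl, fun (x y : Fin (p.upper + q.upper) ⊕ Fin (p.lower + q.lower)) => ?_⟩
  change Sum.map (Quotient.mk p.rel) (Quotient.mk q.rel) (splitPoint x) =
      Sum.map (Quotient.mk p.rel) (Quotient.mk q.rel) (splitPoint y) ↔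
    sideBySide p.upper p.lower F G (pointCode x) = sideBySide p.upper p.lower F G (pointCode y)
  rw [sideBySide_pointCode, sideBySide_pointCode]
  generalize splitPoint x = X, splitPoint y = Y
  rcases X with z | z <;> rcases Y with w | w <;> simp [Quotient.eq, hpr, hqr] <;> omega

def emptyPartition : PartitionDiagram := comp pairPartition (invol pairPartition) rfl

def idPow : ℕ → PartitionDiagram
  | 0 => emptyPartition
  | n + 1 => tensor (idPow n) idPartition

/-- The one-block partition in `P(2, 2)`. -/
def fourBlockSquare : PartitionDiagram :=
  rotLD (rotLD fourBlock (Nat.succ_pos 3)) (Nat.succ_pos 2)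

def crossingAt (k m : ℕ) : PartitionDiagram := tensor (tensor (idPow k) crossing) (idPow m)

def fourBlockAt (k m : ℕ) : PartitionDiagram :=
  tensor (tensor (idPow k) fourBlockSquare) (idPow m)

theorem hasShape_emptyPartition (F : Bool × ℕ → ℕ) : HasShape emptyPartition 0 0 F :=
  ⟨rfl, rfl, fun x => x.elim (fun i => i.elim0) fun i => i.elim0⟩

theorem hasShape_idPow (n : ℕ) : HasShape (idPow n) n n Prod.snd := by
  induction n with
  | zero => exact hasShape_emptyPartition _
  | succ n ih =>
    refine (ih.tensor (hasShape_ofLabels (u := 1) (l := 1) _ (fun _ => 0) fun _ => rfl)).congr ?_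
    intro s v s' v' hv hv'
    cases s <;> cases s' <;> simp_all [sideBySide] <;> split_ifs <;> omega

theorem hasShape_crossingAt (k m : ℕ) :
    HasShape (crossingAt k m) (k + 2 + m) (k + 2 + m)
      fun pt => if pt.1 then pt.2 else Equiv.swap k (k + 1) pt.2 := by
  have hX : HasShape crossing 2 2 fun pt => if pt.1 then pt.2 else 1 - pt.2 :=
    hasShape_ofLabels _ _ fun x => by rcases x with i | i <;> rfl
  refine (((hasShape_idPow k).tensor hX).tensor (hasShape_idPow m)).congr ?_
  intro s v s' v' hv hv'
  cases s <;> cases s' <;> simp_all [sideBySide, Equiv.swap_apply_def] <;> split_ifs <;> omega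

theorem hasShape_fourBlockAt (k m : ℕ) :
    HasShape (fourBlockAt k m) (k + 2 + m) (k + 2 + m)
      fun pt => if pt.2 = k + 1 then k else pt.2 := by
  have h4 : HasShape fourBlockSquare 2 2 fun _ => 0 := ⟨rfl, rfl, fun _ _ => Iff.rfl⟩
  refine (((hasShape_idPow k).tensor h4).tensor (hasShape_idPow m)).congr ?_
  intro s v s' v' hv hv'
  cases s <;> cases s' <;> simp_all [sideBySide] <;> split_ifs <;> omega

end PartitionDiagram

open PartitionDiagram

section Realization

variable {M : Set PartitionDiagram}

theorem IsPartitionCategory.idPow_mem (hM : IsPartitionCategory M) (n : ℕ) : idPow n ∈ M := by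
  induction n with
  | zero => exact hM.comp_mem _ hM.pair_mem _ (hM.invol_mem _ hM.pair_mem) rfl
  | succ n ih => exact hM.tensor_mem _ ih _ hM.id_mem

theorem IsPartitionCategory.crossingAt_mem (hM : IsPartitionCategory M) (hX : crossing ∈ M)
    (k m : ℕ) : crossingAt k m ∈ M :=
  hM.tensor_mem _ (hM.tensor_mem _ (hM.idPow_mem k) _ hX) _ (hM.idPow_mem m)

theorem IsPartitionCategory.fourBlockAt_mem (hM : IsPartitionCategory M) (h4 : fourBlock ∈ M)
    (k m : ℕ) : fourBlockAt k m ∈ M :=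
  hM.tensor_mem _ (hM.tensor_mem _ (hM.idPow_mem k) _ (hM.rotLD_mem _ (hM.rotLD_mem _ h4 _) _)) _
    (hM.idPow_mem m)

/-- The partition of `n` lower points whose blocks are the fibres of `f` on `{0, …, n - 1}`
lies in `M`. -/
def RealizesKer (M : Set PartitionDiagram) (n : ℕ) (f : ℕ → ℕ) : Prop :=
  ∃ p ∈ M, HasShape p 0 n fun pt => f pt.2

theorem RealizesKer.congr {n : ℕ} {f g : ℕ → ℕ} (hf : RealizesKer M n f)
    (hfg : ∀ v < n, ∀ w < n, (f v = f w ↔ g v = g w)) : RealizesKer M n g := by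
  obtain ⟨p, hp, hpf⟩ := hf
  refine ⟨p, hp, hpf.congr fun s v s' v' hv hv' => ?_⟩
  cases s <;> cases s' <;> simp_all

theorem RealizesKer.congr_of_eqOn {n : ℕ} {f g : ℕ → ℕ} (hf : RealizesKer M n f)
    (hfg : ∀ v < n, f v = g v) : RealizesKer M n g :=
  hf.congr fun v hv w hw => by rw [hfg v hv, hfg w hw]

/-- The position in the middle row of a composition `q ∘ p` that a point of `q ∈ P(n, n)` is
tied to: upper point `i` is itself, lower point `j` hangs on `σ j`. -/
def gluePos (σ : ℕ → ℕ) {n : ℕ} (a : Fin n ⊕ Fin n) : ℕ :=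
  if (pointCode a).1 then (pointCode a).2 else σ (pointCode a).2

section Glue

variable {n : ℕ} {r : Setoid (Fin 0 ⊕ Fin n)} {s : Setoid (Fin n ⊕ Fin n)}
  {f G σ h : ℕ → ℕ}

theorem gluePos_lt (hσ : ∀ v < n, σ v < n) (a : Fin n ⊕ Fin n) : gluePos σ a < n := by
  rcases a with i | i <;> simp [gluePos, pointCode, hσ]

theorem eqvGen_compRel_imp_eq (hr : ∀ x y, r x y ↔ f (pointCode x).2 = f (pointCode y).2)
    (hs : ∀ a b, s a b ↔ G (gluePos σ a) = G (gluePos σ b)) (hσ : ∀ v < n, σ v < n)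
    (hfh : ∀ v < n, ∀ w < n, f v = f w → h v = h w)
    (hGh : ∀ v < n, ∀ w < n, G v = G w → h v = h w)
    {u v : Fin 0 ⊕ (Fin n ⊕ Fin n)}
    (huv : Relation.EqvGen (compRel ⟨0, n, r⟩ ⟨n, n, s⟩ rfl) u v) :
    Sum.elim Fin.elim0 (fun a => h (gluePos σ a)) u =
      Sum.elim Fin.elim0 (fun a => h (gluePos σ a)) v := by
  refine Relation.EqvGen.eqvGen_le (r' := Function.onFun (· = ·) _) ?_ _ _ huv
  rintro _ _ (⟨a, b, hab, rfl, rfl⟩ | ⟨a, b, hab, rfl, rfl⟩)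
  · rcases a with ⟨_, ⟨⟩⟩ | i
    rcases b with ⟨_, ⟨⟩⟩ | j
    exact hfh i i.isLt j j.isLt ((hr _ _).1 hab)
  · rcases a with i | i <;> rcases b with j | j <;>
      exact hGh _ (gluePos_lt hσ _) _ (gluePos_lt hσ _) ((hs _ _).1 hab)

theorem eqvGen_compRel_of_eq (hr : ∀ x y, r x y ↔ f (pointCode x).2 = f (pointCode y).2)
    (hs : ∀ a b, s a b ↔ G (gluePos σ a) = G (gluePos σ b)) (hσ : ∀ v < n, σ v < n)
    (hh : ∀ v w : Fin n, h v = h w →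
      Relation.EqvGen (fun a b : Fin n => f a = f b ∨ G a = G b) v w)
    {x y : Fin n} (hxy : h (σ x) = h (σ y)) :
    Relation.EqvGen (compRel ⟨0, n, r⟩ ⟨n, n, s⟩ rfl) (.inr (.inr x)) (.inr (.inr y)) := by
  let R := compRel ⟨0, n, r⟩ ⟨n, n, s⟩ rfl
  let mid : Fin n → Fin 0 ⊕ (Fin n ⊕ Fin n) := fun v => .inr (.inl v)
  have hmid : ∀ v w : Fin n, (f v = f w ∨ G v = G w) → R (mid v) (mid w) := by
    rintro v w (hvw | hvw)
    · exact Or.inl ⟨.inr v, .inr w, (hr _ _).2 hvw, rfl, rfl⟩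
    · exact Or.inr ⟨.inl v, .inl w, (hs _ _).2 hvw, rfl, rfl⟩
  have hlow : ∀ j : Fin n, R (.inr (.inr j)) (mid ⟨σ j, hσ j j.isLt⟩) :=
    fun j => Or.inr ⟨.inr j, .inl ⟨σ j, hσ j j.isLt⟩, (hs _ _).2 rfl, rfl, rfl⟩
  have hxy' := Relation.EqvGen.eqvGen_le (r' := Function.onFun (Relation.EqvGen R) mid)
    (fun v w hvw => .rel _ _ (hmid v w hvw)) _ _
    (hh ⟨σ x, hσ x x.isLt⟩ ⟨σ y, hσ y y.isLt⟩ hxy)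
  exact .trans _ _ _ (.rel _ _ (hlow x)) (.trans _ _ _ hxy' (.symm _ _ (.rel _ _ (hlow y))))

end Glue

/-- Composing with `q`, whose upper points are grouped by `G` and whose lower point `j` hangs
on upper point `σ j`, joins the fibres of `f` and of `G`; `h` is any function whose fibres
on `{0, …, n - 1}` are exactly the blocks of that join. -/
theorem RealizesKer.comp (hM : IsPartitionCategory M) {n : ℕ} {f : ℕ → ℕ}
    (hf : RealizesKer M n f) {q : PartitionDiagram} (hq : q ∈ M) {G σ h : ℕ → ℕ}
    (hσ : ∀ v < n, σ v < n) (hqG : HasShape q n n fun pt => G (if pt.1 then pt.2 else σ pt.2))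
    (hfh : ∀ v < n, ∀ w < n, f v = f w → h v = h w)
    (hGh : ∀ v < n, ∀ w < n, G v = G w → h v = h w)
    (hh : ∀ v w : Fin n, h v = h w →
      Relation.EqvGen (fun a b : Fin n => f a = f b ∨ G a = G b) v w) :
    RealizesKer M n fun v => h (σ v) := by
  obtain ⟨⟨u, l, r⟩, hp, hu, hl, hr⟩ := hf
  obtain ⟨u', l', s⟩ := q
  obtain ⟨hu', hl', hs⟩ := hqG
  dsimp only at hu hl hu' hl'
  subst u l u' l'
  refine ⟨PartitionDiagram.comp ⟨0, n, r⟩ ⟨n, n, s⟩ rfl, hM.comp_mem _ hp _ hq rfl, rfl, rfl,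
    ?_⟩
  rintro (⟨_, ⟨⟩⟩ | x) (⟨_, ⟨⟩⟩ | y)
  exact ⟨eqvGen_compRel_imp_eq hr hs hσ hfh hGh, eqvGen_compRel_of_eq hr hs hσ hh⟩

theorem RealizesKer.comp_swap (hM : IsPartitionCategory M) (hX : crossing ∈ M) {n k : ℕ}
    {f : ℕ → ℕ} (hf : RealizesKer M n f) (hk : k + 1 < n) :
    RealizesKer M n fun v => f (Equiv.swap k (k + 1) v) := by
  obtain ⟨m, rfl⟩ : ∃ m, n = k + 2 + m := ⟨n - (k + 2), by omega⟩
  refine hf.comp hM (G := id) (h := f)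
    (hM.crossingAt_mem hX k m) (fun v hv => ?_) (hasShape_crossingAt k m) (fun _ _ _ _ => id)
    (fun _ _ _ _ hvw => congrArg f hvw) (fun _ _ hvw => .rel _ _ (Or.inl hvw))
  rw [Equiv.swap_apply_def]
  split_ifs <;> omega

theorem RealizesKer.comp_merge_succ (hM : IsPartitionCategory M) (h4 : fourBlock ∈ M)
    {n k : ℕ} {f : ℕ → ℕ} (hf : RealizesKer M n f) (hk : k + 1 < n) :
    RealizesKer M n fun v => if f v = f (k + 1) then f k else f v := by
  obtain ⟨m, rfl⟩ : ∃ m, n = k + 2 + m := ⟨n - (k + 2), by omega⟩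
  let t : Fin (k + 2 + m) := ⟨k + 1, hk⟩
  let s : Fin (k + 2 + m) := ⟨k, by omega⟩
  let R : Fin (k + 2 + m) → Fin (k + 2 + m) → Prop := fun a b =>
    f a = f b ∨ (if (a : ℕ) = k + 1 then k else a) = (if (b : ℕ) = k + 1 then k else b)
  have toS : ∀ u : Fin (k + 2 + m), f u = f (k + 1) → Relation.EqvGen R u s :=
    fun u hu => .trans _ t _ (.rel _ _ (Or.inl hu)) (.rel _ _ (Or.inr (by simp [t, s])))
  refine hf.comp hM (G := fun v => if v = k + 1 then k else v) (σ := fun v => v)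
    (h := fun v => if f v = f (k + 1) then f k else f v)
    (hM.fourBlockAt_mem h4 k m) (fun v hv => hv)
    ((hasShape_fourBlockAt k m).congr fun s v s' v' _ _ => by simp) ?_ ?_ ?_
  · intro v _ w _ hvw
    simp only [hvw]
  · intro v _ w _ hvw
    split_ifs at hvw <;> subst_vars <;> simp
  · intro v w hvw
    split_ifs at hvw with hv hw hw
    · exact .trans _ _ _ (toS v hv) (.symm _ _ (toS w hw))
    · exact .trans _ _ _ (toS v hv) (.rel _ _ (Or.inl hvw))
    · exact .trans _ _ _ (.rel _ _ (Or.inl hvw)) (.symm _ _ (toS w hw))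
    · exact .rel _ _ (Or.inl hvw)

theorem RealizesKer.comp_merge (hM : IsPartitionCategory M) (hX : crossing ∈ M)
    (h4 : fourBlock ∈ M) {n i j : ℕ} {f : ℕ → ℕ} (hf : RealizesKer M n f) (hij : i < j)
    (hj : j < n) : RealizesKer M n fun v => if f v = f j then f i else f v := by
  induction j generalizing f with
  | zero => omega
  | succ j ih =>
    obtain hij | rfl := Nat.lt_succ_iff_lt_or_eq.1 hij
    · refine ((ih (hf.comp_swap hM hX hj) hij (by omega)).comp_swap hM hX hj).congr_of_eqOn
        fun v _ => ?_
      simp [Equiv.swap_apply_of_ne_of_ne, hij.ne, (hij.trans j.lt_succ_self).ne]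
    · exact hf.comp_merge_succ hM h4 hj

theorem realizesKer_id_of_even (hM : IsPartitionCategory M) (hds : doubleSingleton ∈ M)
    {n : ℕ} (hn : Even n) : RealizesKer M n id := by
  obtain ⟨m, rfl⟩ := hn
  induction m with
  | zero => exact ⟨idPow 0, hM.idPow_mem 0, hasShape_emptyPartition _⟩
  | succ m ih =>
    obtain ⟨p, hp, hpm⟩ := ih
    have hds' : HasShape doubleSingleton 0 2 Prod.snd :=
      hasShape_ofLabels _ _ fun x => by rcases x with i | i; exacts [i.elim0, rfl]
    rw [show m + 1 + (m + 1) = m + m + 2 by ring]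
    refine ⟨tensor p doubleSingleton, hM.tensor_mem _ hp _ hds, (hpm.tensor hds').congr ?_⟩
    intro s v s' v' hv hv'
    cases s <;> cases s' <;> simp_all [sideBySide]
    split_ifs <;> omega

theorem realizesKer_of_even (hM : IsPartitionCategory M) (hX : crossing ∈ M)
    (hds : doubleSingleton ∈ M) (h4 : fourBlock ∈ M) {n : ℕ} (hn : Even n) (f : ℕ → ℕ) :
    RealizesKer M n f := by
  obtain ⟨N, hN⟩ : ∃ N, ∀ v < n, f v < N :=
    ⟨(Finset.range n).sup f + 1,
      fun v hv => Nat.lt_succ_of_le (Finset.le_sup (Finset.mem_range.2 hv))⟩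
  let g (k v : ℕ) : ℕ := if v < k then f v else N + v
  have hg : ∀ k ≤ n, RealizesKer M n (g k) := by
    intro k hk
    induction k with
    | zero => exact (realizesKer_id_of_even hM hds hn).congr fun v _ w _ => by simp [g]
    | succ k ih =>
      have hfk := hN k hk
      by_cases hdup : ∃ j < k, f j = f k
      · obtain ⟨j, hjk, hj⟩ := hdup
        refine ((ih (by omega)).comp_merge hM hX h4 hjk (by omega)).congr_of_eqOn fun v hv => ?_
        have := hN v hv
        grind
      · push Not at hdup
        refine (ih (by omega)).congr fun v hv w hw => ?_
        have := hN v hv; have := hN w hw; have := hdup v; have := hdup w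
        grind
  exact (hg n le_rfl).congr_of_eqOn fun v hv => if_pos hv

end Realization

def parity : FreeZ2 →* Multiplicative (ZMod 2) :=
  Monoid.CoprodI.lift fun _ => MonoidHom.id _

theorem parity_surjective : Function.Surjective parity :=
  fun b => ⟨Monoid.CoprodI.of (i := 0) b, Monoid.CoprodI.lift_of _ _⟩

theorem parity_prod_map_gen (l : List ℕ) :
    parity (l.map gen).prod = Multiplicative.ofAdd (l.length : ZMod 2) := by
  induction l with
  | nil => rfl
  | cons k l ih =>
    rw [List.map_cons, List.prod_cons, map_mul, ih, List.length_cons, Nat.cast_succ, add_comm,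
      ofAdd_add]
    exact congrArg (· * _) (Monoid.CoprodI.lift_of _ _)

theorem wordOf_eq_prod_map_gen (p : PartitionDiagram) (lab : Fin p.upper ⊕ Fin p.lower → ℕ) :
    wordOf p lab = (((List.ofFn fun j => lab (Sum.inr j)) ++
      (List.ofFn fun i => lab (Sum.inl i)).reverse).map gen).prod := by
  simp only [wordOf, List.map_append, List.map_reverse, List.map_ofFn]
  rfl

theorem parity_wordOf (p : PartitionDiagram) (lab : Fin p.upper ⊕ Fin p.lower → ℕ) :
    parity (wordOf p lab) = Multiplicative.ofAdd ((p.upper + p.lower : ℕ) : ZMod 2) := by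
  rw [wordOf_eq_prod_map_gen, parity_prod_map_gen]
  simp [add_comm]

theorem exists_prod_map_gen_eq (g : FreeZ2) : ∃ l : List ℕ, (l.map gen).prod = g := by
  induction g using Monoid.CoprodI.induction_on with
  | one => exact ⟨[], rfl⟩
  | of i m =>
    rcases (show m = 1 ∨ m = Multiplicative.ofAdd 1 by revert m; decide) with rfl | rfl
    · exact ⟨[], by simp⟩
    · exact ⟨[i], by simp [gen]⟩
  | mul x y hx hy =>
    obtain ⟨lx, rfl⟩ := hx
    obtain ⟨ly, rfl⟩ := hy
    exact ⟨lx ++ ly, by simp⟩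

theorem prod_map_gen_mem_Fmap {M : Set PartitionDiagram} {l : List ℕ}
    (hl : RealizesKer M l.length fun v => l.getD v 0) : (l.map gen).prod ∈ Fmap M := by
  obtain ⟨⟨u, lo, r⟩, hp, hu, hlo, hr⟩ := hl
  dsimp only at hu hlo
  subst u lo
  refine ⟨_, hp, fun x => l.getD (pointCode x).2 0, fun x y => (hr x y).symm, ?_⟩
  simp [wordOf_eq_prod_map_gen, pointCode]

/-- For the category of partitions `C = ⟨⨯, ↑⊗↑, ⊓⊓⟩` generated by the crossing
partition, the double singleton and the four block partition, `F(C)` is the kernel of the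
homomorphism `Z_2^{*∞} → Z_2` sending every generator to the nontrivial element of `Z_2`,
and `Z_2^{*∞}/F(C) ≅ Z_2`. -/
theorem Fmap_generated_crossing_doubleSingleton_fourBlock :
    Fmap (generatedCategory
        {PartitionDiagram.crossing, PartitionDiagram.doubleSingleton,
          PartitionDiagram.fourBlock}) =
      (MonoidHom.ker
        (Monoid.CoprodI.lift fun _ : ℕ => MonoidHom.id (Multiplicative (ZMod 2))) :
          Set FreeZ2) ∧
    Nonempty ((FreeZ2 ⧸ MonoidHom.ker
        (Monoid.CoprodI.lift fun _ : ℕ => MonoidHom.id (Multiplicative (ZMod 2)))) ≃*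
      Multiplicative (ZMod 2)) := by
  set S : Set PartitionDiagram := {crossing, doubleSingleton, fourBlock}
  have hC := isPartitionCategory_generatedCategory S
  have hS := subset_generatedCategory S
  refine ⟨Set.Subset.antisymm ?_ ?_,
    ⟨QuotientGroup.quotientKerEquivOfSurjective _ parity_surjective⟩⟩
  · rintro _ ⟨p, hp, lab, -, rfl⟩
    have hpeven := even_upper_add_lower_of_mem_generatedCategory
      (by rintro _ (rfl | rfl | rfl) <;> decide) hp
    change parity (wordOf p lab) = 1
    rw [parity_wordOf, (ZMod.natCast_eq_zero_iff_even).2 hpeven]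
    rfl
  · intro g hg
    obtain ⟨l, rfl⟩ := exists_prod_map_gen_eq g
    have hl : Even l.length := by
      rw [← ZMod.natCast_eq_zero_iff_even, ← ofAdd_eq_one, ← parity_prod_map_gen]
      exact hg
    exact prod_map_gen_mem_Fmap
      (realizesKer_of_even hC (hS (.inl rfl)) (hS (.inr (.inl rfl))) (hS (.inr (.inr rfl))) hl _)
end
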